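/- Let τ > 0 and let (a_n) be a sequence of nonnegative reals with a_0 = A such that for every n, a_{n+1} - a_n ≤ τ γ (a_n + a_{n+1}) + τ c with τ γ < 1/4. Then for all n, a_n ≤ (A + n τ c) · exp(8 γ n τ). -/

import Mathlib

/-!
Clearing denominators, the recursion reads `(1 - τγ) a_{n+1} ≤ (1 + τγ) a_n + τc`. For
`0 ≤ x ≤ 3/4` one has `1 + x ≤ (1 - x)(1 + 8x) ≤ (1 - x) e^{8x}`, so each step gives
`a_{n+1} ≤ e^{8τγ} (a_n + τc)`, and iterating this linear recursion yields the bound.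
-/

open Real

lemma one_add_le_one_sub_mul_exp {x : ℝ} (hx₀ : 0 ≤ x) (hx : x ≤ 3 / 4) :
    1 + x ≤ (1 - x) * exp (8 * x) :=
  calc 1 + x ≤ (1 - x) * (8 * x + 1) := by nlinarith
    _ ≤ (1 - x) * exp (8 * x) := mul_le_mul_of_nonneg_left (add_one_le_exp _) (by linarith)

lemma le_exp_mul_add_of_sub_le {x u v f : ℝ} (hx₀ : 0 ≤ x) (hx : x ≤ 3 / 4) (hu : 0 ≤ u)
    (hf : 0 ≤ f) (h : v - u ≤ x * (u + v) + f) :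
    v ≤ exp (8 * x) * (u + f) := by
  have hE := one_add_le_one_sub_mul_exp hx₀ hx
  have hE₁ : 1 ≤ (1 - x) * exp (8 * x) := by linarith
  have hcleared : (1 - x) * v ≤ (1 - x) * (exp (8 * x) * (u + f)) := by
    nlinarith [mul_le_mul_of_nonneg_left hE hu, mul_le_mul_of_nonneg_left hE₁ hf]
  exact le_of_mul_le_mul_left hcleared (by linarith)

lemma le_add_mul_mul_pow_of_le_mul_add {a : ℕ → ℝ} {K f : ℝ} (hK : 1 ≤ K) (hf : 0 ≤ f)
    (h : ∀ n, a (n + 1) ≤ K * (a n + f)) (n : ℕ) :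
    a n ≤ (a 0 + n * f) * K ^ n := by
  induction n with
  | zero => simp
  | succ n ih =>
    have hf_le : f ≤ f * K ^ n := le_mul_of_one_le_right hf (one_le_pow₀ hK)
    calc a (n + 1) ≤ K * (a n + f) := h n
      _ ≤ K * ((a 0 + n * f) * K ^ n + f * K ^ n) := by gcongr
      _ = (a 0 + ↑(n + 1) * f) * K ^ (n + 1) := by push_cast; ring

/-- A one-step discrete Gronwall-type estimate. -/
theorem one_step_discrete_gronwall
    (τ γ c A : ℝ) (a : ℕ → ℝ)
    (hτ : 0 < τ) (hγ : 0 ≤ γ) (hc : 0 ≤ c)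
    (ha : ∀ n, 0 ≤ a n) (ha0 : a 0 = A)
    (hrec : ∀ n, a (n + 1) - a n ≤ τ * γ * (a n + a (n + 1)) + τ * c)
    (hsmall : τ * γ < 1 / 4) :
    ∀ n : ℕ, a n ≤ (A + n * τ * c) * Real.exp (8 * γ * n * τ) := by
  intro n
  have hstep (k : ℕ) : a (k + 1) ≤ exp (8 * (τ * γ)) * (a k + τ * c) :=
    le_exp_mul_add_of_sub_le (by positivity) (by linarith) (ha k) (by positivity) (hrec k)
  have hbound := le_add_mul_mul_pow_of_le_mul_add (one_le_exp (by positivity)) (by positivity)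
    hstep n
  rw [← exp_nat_mul, ha0] at hbound
  convert hbound using 3 <;> ring
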